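/- Let n ≥ 1, a, b ≥ 0 with b > 0, and let M be the n × n matrix with M_{ii} = a and M_{ij} = b for i ≠ j. Define Θ(ξ) = ρ(M·Diag(ξ)) for ξ ∈ [0,∞)^n, where ρ denotes the spectral radius. If a ≥ b, then Θ is Schur-convex: ξ ≺ χ implies Θ(ξ) ≤ Θ(χ). If a ≤ b, then Θ is Schur-concave: ξ ≺ χ implies Θ(ξ) ≥ Θ(χ). -/

import Mathlib

/-!
With `c = a - b`, the matrix `M Diag(ξ) = c Diag(ξ) + b 𝟙 ξᵀ` is a rank-one perturbation of a
diagonal matrix, so for `t > max c ξᵢ` its characteristic polynomial at `t` equals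
`∏ (t - c ξᵢ) · (1 - ∑ b ξᵢ / (t - c ξᵢ))`. Hence `t > ρ(M Diag(ξ))` forces `c ξᵢ < t` for all `i`
and a secular sum `∑ b ξᵢ / (t - c ξᵢ) < 1`; conversely, a secular sum `≤ 1` gives `ρ ≤ t` by the
Collatz–Wielandt bound with weights `(t - c ξᵢ)⁻¹`. The summand `x ↦ b x / (t - c x)` is convex
for `c ≥ 0` and concave for `c ≤ 0`, so Karamata's inequality compares the secular sums of
`ξ ≺ χ`, and with them the spectral radii.
-/

/-- The sum of the `m` largest entries of `ξ ∈ ℝ^n`, expressed as the supremum of the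
sums of `ξ` over subsets of cardinality `m`. -/
noncomputable def topSum {n : ℕ} (ξ : Fin n → ℝ) (m : ℕ) : ℝ :=
  sSup ((fun s : Finset (Fin n) => ∑ i ∈ s, ξ i) '' {s | s.card = m})

/-- `ξ` is majorized by `χ`: for every `m`, the sum of the `m` largest entries of `ξ`
is at most the sum of the `m` largest entries of `χ`, and the total sums agree. -/
def IsMajorizedBy {n : ℕ} (ξ χ : Fin n → ℝ) : Prop :=
  (∀ m, m ≤ n → topSum ξ m ≤ topSum χ m) ∧ ∑ i, ξ i = ∑ i, χ i

/-- The spectral radius of a real square matrix: the maximum of the moduli of its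
complex eigenvalues. -/
noncomputable def matrixSpecRad {n : ℕ} (A : Matrix (Fin n) (Fin n) ℝ) : ℝ :=
  sSup ((fun z : ℂ => ‖z‖) '' spectrum ℂ (A.map Complex.ofReal))

open Finset Matrix Polynomial Filter

lemma exists_mulVec_eq_smul_of_mem_spectrum {ι K : Type*} [Fintype ι] [DecidableEq ι] [Field K]
    {B : Matrix ι ι K} {μ : K} (hμ : μ ∈ spectrum K B) : ∃ v ≠ 0, B *ᵥ v = μ • v := by
  rw [← Matrix.spectrum_toLin', ← Module.End.hasEigenvalue_iff_mem_spectrum] at hμ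
  obtain ⟨v, hv⟩ := hμ.exists_hasEigenvector
  exact ⟨v, hv.2, by simpa using hv.apply_eq_smul⟩

section SpectralRadius

variable {n : ℕ} (A : Matrix (Fin n) (Fin n) ℝ)

lemma matrixSpecRad_nonneg : 0 ≤ matrixSpecRad A :=
  Real.sSup_nonneg fun _ ⟨z, _, hz⟩ => hz ▸ norm_nonneg z

lemma norm_le_matrixSpecRad {μ : ℂ} (hμ : μ ∈ spectrum ℂ (A.map Complex.ofReal)) :
    ‖μ‖ ≤ matrixSpecRad A :=
  le_csSup ((Matrix.finite_spectrum _).image _).bddAbove ⟨μ, hμ, rfl⟩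

lemma le_matrixSpecRad_of_isRoot_charpoly {r : ℝ} (hr : A.charpoly.IsRoot r) :
    r ≤ matrixSpecRad A := by
  have hmem : (r : ℂ) ∈ spectrum ℂ (A.map Complex.ofReal) := by
    rw [Matrix.mem_spectrum_iff_isRoot_charpoly]
    have h := hr.map (f := Complex.ofRealHom)
    rwa [← charpoly_map] at h
  calc r ≤ ‖(r : ℂ)‖ := (le_abs_self r).trans_eq (Complex.norm_real r).symm
    _ ≤ matrixSpecRad A := norm_le_matrixSpecRad A hmem

lemma eventually_pos_eval_charpoly : ∀ᶠ t in atTop, 0 < A.charpoly.eval t := by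
  by_cases hdeg : 0 < A.charpoly.degree
  · exact (tendsto_atTop_of_leadingCoeff_nonneg _ hdeg
      (A.charpoly_monic.leadingCoeff ▸ zero_le_one)).eventually_gt_atTop 0
  · rw [(Monic.degree_le_zero_iff_eq_one A.charpoly_monic).1 (not_lt.1 hdeg)]
    simp

/-- The characteristic polynomial is monic, so a nonpositive value at `t` forces a real root
to the right of `t`. -/
lemma le_matrixSpecRad_of_eval_charpoly_nonpos {t : ℝ} (ht : A.charpoly.eval t ≤ 0) :
    t ≤ matrixSpecRad A := by
  obtain ⟨T, hT, htT⟩ := ((eventually_pos_eval_charpoly A).and (eventually_ge_atTop t)).exists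
  obtain ⟨r, ⟨htr, -⟩, hr⟩ := intermediate_value_Icc htT A.charpoly.continuous.continuousOn
    ⟨ht, hT.le⟩
  exact htr.trans (le_matrixSpecRad_of_isRoot_charpoly A hr)

/-- Collatz–Wielandt bound. Along an eigenvector `v`, look at an index maximising
`‖v i‖ / w i`. -/
lemma matrixSpecRad_le_of_mulVec_le (hA : ∀ i j, 0 ≤ A i j) {w : Fin n → ℝ}
    (hw : ∀ i, 0 < w i) {t : ℝ} (ht : 0 ≤ t) (hAw : ∀ i, (A *ᵥ w) i ≤ t * w i) :
    matrixSpecRad A ≤ t := by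
  refine Real.sSup_le ?_ ht
  rintro _ ⟨μ, hμ, rfl⟩
  obtain ⟨v, hv0, hv⟩ := exists_mulVec_eq_smul_of_mem_spectrum hμ
  obtain ⟨j, hj⟩ := Function.ne_iff.1 hv0
  obtain ⟨i, -, hi⟩ := exists_max_image univ (fun i => ‖v i‖ / w i) ⟨j, mem_univ j⟩
  set s := ‖v i‖ / w i
  have hvs : ∀ k, ‖v k‖ ≤ s * w k := fun k =>
    (div_le_iff₀ (hw k)).1 (hi k (mem_univ k))
  have hs : 0 < s := (div_pos (norm_pos_iff.2 hj) (hw j)).trans_le (hi j (mem_univ j))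
  have hvi : ‖v i‖ = s * w i := (div_mul_cancel₀ _ (hw i).ne').symm
  have key : ‖μ‖ * (s * w i) ≤ t * (s * w i) := calc
    ‖μ‖ * (s * w i) = ‖∑ k, (A i k : ℂ) * v k‖ := by
      rw [← hvi, ← norm_mul, ← smul_eq_mul, ← Pi.smul_apply, ← hv]; rfl
    _ ≤ ∑ k, A i k * ‖v k‖ := (norm_sum_le _ _).trans_eq <| sum_congr rfl fun k _ => by
      rw [norm_mul, Complex.norm_real, Real.norm_of_nonneg (hA i k)]
    _ ≤ ∑ k, A i k * (s * w k) := sum_le_sum fun k _ => mul_le_mul_of_nonneg_left (hvs k) (hA i k)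
    _ = s * (A *ᵥ w) i := by
      simp only [mulVec, dotProduct, mul_sum]
      exact sum_congr rfl fun k _ => by ring
    _ ≤ t * (s * w i) := (mul_le_mul_of_nonneg_left (hAw i) hs.le).trans_eq (by ring)
  exact le_of_mul_le_mul_right key (mul_pos hs (hw i))

end SpectralRadius

lemma Fin.val_le_orderEmbedding {m n : ℕ} (f : Fin m ↪o Fin n) (k : Fin m) : (k : ℕ) ≤ f k := by
  have h := card_le_card_of_injOn f (fun j hj => mem_Iic.2 (f.monotone (mem_Iic.1 hj)))
    f.injective.injOn (s := Iic k)
  simpa [Fin.card_Iic] using h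

section Majorization

variable {n : ℕ}

lemma le_topSum_one {ξ : Fin n → ℝ} (i : Fin n) : ξ i ≤ topSum ξ 1 :=
  le_csSup (Set.toFinite _).bddAbove ⟨{i}, card_singleton i, sum_singleton _ _⟩

lemma exists_eq_topSum_one (ξ : Fin n → ℝ) (hn : 1 ≤ n) : ∃ j, ξ j = topSum ξ 1 := by
  obtain ⟨s, hs, hsum⟩ : topSum ξ 1 ∈ _ :=
    Set.Nonempty.csSup_mem ⟨_, ⟨{⟨0, hn⟩}, card_singleton _, rfl⟩⟩ (Set.toFinite _)
  obtain ⟨j, rfl⟩ := card_eq_one.1 hs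
  exact ⟨j, (sum_singleton _ _).symm.trans hsum⟩

lemma IsMajorizedBy.exists_le {ξ χ : Fin n → ℝ} (h : IsMajorizedBy ξ χ) (i : Fin n) :
    ∃ j, ξ i ≤ χ j := by
  have hn : 1 ≤ n := Nat.one_le_of_lt i.2
  obtain ⟨j, hj⟩ := exists_eq_topSum_one χ hn
  exact ⟨j, hj ▸ (le_topSum_one i).trans (h.1 1 hn)⟩

lemma topSum_comp_perm (ξ : Fin n → ℝ) (e : Equiv.Perm (Fin n)) (m : ℕ) :
    topSum (ξ ∘ e) m = topSum ξ m := by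
  unfold topSum
  congr 1
  ext x
  constructor
  · rintro ⟨s, hs, rfl⟩
    exact ⟨s.map e.toEmbedding, by simpa using hs, by simp⟩
  · rintro ⟨s, hs, rfl⟩
    exact ⟨s.map e.symm.toEmbedding, by simpa using hs, by simp⟩

lemma exists_antitone_comp_perm (ξ : Fin n → ℝ) :
    ∃ (z : Fin n → ℝ) (e : Equiv.Perm (Fin n)), Antitone z ∧ ξ = z ∘ e :=
  ⟨ξ ∘ Tuple.sort ξ ∘ Fin.revPerm, (Tuple.sort ξ)⁻¹.trans Fin.revPerm,
    fun _ _ hij => Tuple.monotone_sort ξ (Fin.rev_le_rev.2 hij), by ext; simp⟩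

noncomputable def extendByZero (z : Fin n → ℝ) (k : ℕ) : ℝ :=
  if h : k < n then z ⟨k, h⟩ else 0

lemma extendByZero_of_lt {k : ℕ} (z : Fin n → ℝ) (h : k < n) : extendByZero z k = z ⟨k, h⟩ :=
  dif_pos h

@[simp] lemma extendByZero_val (z : Fin n → ℝ) (i : Fin n) : extendByZero z i = z i :=
  extendByZero_of_lt z i.2

lemma sum_range_extendByZero (z : Fin n → ℝ) :
    ∑ k ∈ range n, extendByZero z k = ∑ i, z i := by
  simp [← Fin.sum_univ_eq_sum_range]

lemma Antitone.topSum_eq {m : ℕ} {z : Fin n → ℝ} (hz : Antitone z) (hm : m ≤ n) :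
    topSum z m = ∑ k ∈ range m, extendByZero z k := by
  have hsum : ∑ k ∈ range m, extendByZero z k = ∑ k : Fin m, z (Fin.castLE hm k) := by
    rw [← Fin.sum_univ_eq_sum_range]
    exact sum_congr rfl fun k _ => extendByZero_of_lt z _
  refine IsGreatest.csSup_eq ⟨⟨univ.map (Fin.castLEOrderEmb hm).toEmbedding, ?_, ?_⟩, ?_⟩
  · simp
  · simp [hsum, Fin.castLEOrderEmb]
  · rintro _ ⟨s, hs, rfl⟩
    dsimp only
    rw [hsum, ← map_orderEmbOfFin_univ s hs, sum_map]
    exact sum_le_sum fun k _ => hz (Fin.val_le_orderEmbedding _ k)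

end Majorization

section Karamata

lemma sum_range_mul_nonneg_of_antitone {s d : ℕ → ℝ} {n : ℕ}
    (hs : ∀ k, k + 1 < n → s (k + 1) ≤ s k)
    (hd : ∀ m ≤ n, 0 ≤ ∑ k ∈ range m, d k) (hdn : ∑ k ∈ range n, d k = 0) :
    0 ≤ ∑ k ∈ range n, s k * d k := by
  have h := sum_range_by_parts s d n
  simp only [smul_eq_mul] at h
  rw [h, hdn, mul_zero, zero_sub, neg_nonneg]
  refine sum_nonpos fun k hk => ?_
  have hk : k + 1 < n := by rw [mem_range] at hk; omega
  exact mul_nonpos_of_nonpos_of_nonneg (sub_nonpos.2 (hs k hk)) (hd (k + 1) hk.le)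

variable {D : Set ℝ} {φ : ℝ → ℝ} (S : ℝ → ℝ → ℝ)

/-- Karamata's inequality for nonincreasing sequences; convexity of `φ` on `D` is expressed by a
divided difference `S` that is monotone in both arguments. -/
theorem sum_range_le_of_partialSums_le {n : ℕ} {x y : ℕ → ℝ}
    (hφ : ∀ x ∈ D, ∀ y ∈ D, φ y - φ x = S x y * (y - x))
    (hS : ∀ x ∈ D, ∀ y ∈ D, ∀ x' ∈ D, ∀ y' ∈ D, x ≤ x' → y ≤ y' → S x y ≤ S x' y')
    (hxD : ∀ k < n, x k ∈ D) (hyD : ∀ k < n, y k ∈ D)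
    (hx : ∀ k, k + 1 < n → x (k + 1) ≤ x k) (hy : ∀ k, k + 1 < n → y (k + 1) ≤ y k)
    (hxy : ∀ m ≤ n, ∑ k ∈ range m, x k ≤ ∑ k ∈ range m, y k)
    (hn : ∑ k ∈ range n, x k = ∑ k ∈ range n, y k) :
    ∑ k ∈ range n, φ (x k) ≤ ∑ k ∈ range n, φ (y k) := by
  rw [← sub_nonneg, ← sum_sub_distrib]
  have hterm : ∀ k ∈ range n, φ (y k) - φ (x k) = S (x k) (y k) * (y k - x k) := fun k hk =>
    hφ _ (hxD k (mem_range.1 hk)) _ (hyD k (mem_range.1 hk))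
  rw [sum_congr rfl hterm]
  refine sum_range_mul_nonneg_of_antitone (fun k hk => ?_) (fun m hm => ?_) ?_
  · exact hS _ (hxD _ hk) _ (hyD _ hk) _ (hxD _ (by omega)) _ (hyD _ (by omega))
      (hx k hk) (hy k hk)
  · rw [sum_sub_distrib, sub_nonneg]; exact hxy m hm
  · rw [sum_sub_distrib, hn, sub_self]

theorem IsMajorizedBy.sum_le_sum_of_slope {n : ℕ} {ξ χ : Fin n → ℝ} (h : IsMajorizedBy ξ χ)
    (hφ : ∀ x ∈ D, ∀ y ∈ D, φ y - φ x = S x y * (y - x))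
    (hS : ∀ x ∈ D, ∀ y ∈ D, ∀ x' ∈ D, ∀ y' ∈ D, x ≤ x' → y ≤ y' → S x y ≤ S x' y')
    (hξD : ∀ i, ξ i ∈ D) (hχD : ∀ i, χ i ∈ D) :
    ∑ i, φ (ξ i) ≤ ∑ i, φ (χ i) := by
  obtain ⟨x, e, hx, rfl⟩ := exists_antitone_comp_perm ξ
  obtain ⟨y, e', hy, rfl⟩ := exists_antitone_comp_perm χ
  have hsum : ∀ z : Fin n → ℝ, ∀ e : Equiv.Perm (Fin n),
      ∑ i, φ ((z ∘ e) i) = ∑ k ∈ range n, φ (extendByZero z k) := fun z e => by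
    rw [Function.comp_def, Equiv.sum_comp e (fun i => φ (z i)), ← Fin.sum_univ_eq_sum_range]
    simp
  have hmem : ∀ z : Fin n → ℝ, ∀ e : Equiv.Perm (Fin n), (∀ i, (z ∘ e) i ∈ D) →
      ∀ k < n, extendByZero z k ∈ D := fun z e hz k hk => by
    simpa [extendByZero_of_lt z hk] using hz (e.symm ⟨k, hk⟩)
  have hanti : ∀ z : Fin n → ℝ, Antitone z →
      ∀ k, k + 1 < n → extendByZero z (k + 1) ≤ extendByZero z k := fun z hz k hk => by
    rw [extendByZero_of_lt z hk, extendByZero_of_lt z (by omega)]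
    exact hz (Fin.mk_le_mk.2 k.le_succ)
  have htop : ∀ z : Fin n → ℝ, ∀ e : Equiv.Perm (Fin n), Antitone z →
      ∀ m ≤ n, topSum (z ∘ e) m = ∑ k ∈ range m, extendByZero z k := fun z e hz m hm => by
    rw [topSum_comp_perm, hz.topSum_eq hm]
  rw [hsum x e, hsum y e']
  refine sum_range_le_of_partialSums_le S hφ hS (hmem x e hξD) (hmem y e' hχD) (hanti x hx)
    (hanti y hy) (fun m hm => ?_) ?_
  · rw [← htop x e hx m hm, ← htop y e' hy m hm]
    exact h.1 m hm
  · rw [sum_range_extendByZero, sum_range_extendByZero, ← Equiv.sum_comp e x,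
      ← Equiv.sum_comp e' y]
    exact h.2

end Karamata

noncomputable def secularSum {n : ℕ} (b c : ℝ) (ξ : Fin n → ℝ) (t : ℝ) : ℝ :=
  ∑ i, b * ξ i / (t - c * ξ i)

section Secular

variable {n : ℕ} {a b : ℝ} {M : Matrix (Fin n) (Fin n) ℝ}

/-- `t - M Diag(ξ) = D (1 - D⁻¹ 𝟙 (b ξ)ᵀ)` with `D = Diag(t - (a - b) ξ)`, and the matrix
determinant lemma applies to the rank-one perturbation of `1`. -/
lemma eval_charpoly_mul_diagonal (hM : ∀ i j, M i j = if i = j then a else b)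
    {ξ : Fin n → ℝ} {t : ℝ} (ht : ∀ i, t - (a - b) * ξ i ≠ 0) :
    (M * diagonal ξ).charpoly.eval t =
      (∏ i, (t - (a - b) * ξ i)) * (1 - secularSum b (a - b) ξ t) := by
  set d : Fin n → ℝ := fun i => t - (a - b) * ξ i
  have hfac : scalar (Fin n) t - M * diagonal ξ = diagonal d *
      (1 + replicateCol Unit (fun i => -(d i)⁻¹) * replicateRow Unit (fun j => b * ξ j)) := by
    ext i j
    have hdi : d i * (d i)⁻¹ = 1 := mul_inv_cancel₀ (ht i)
    rw [diagonal_mul, Matrix.sub_apply, mul_diagonal]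
    simp only [scalar_apply, diagonal_apply, Matrix.add_apply, one_apply,
      mul_apply, replicateCol_apply, replicateRow_apply, Finset.univ_unique, sum_singleton, hM]
    by_cases hij : i = j
    · subst hij
      simp only [if_true, d] at hdi ⊢
      linear_combination b * ξ i * hdi
    · simp only [hij, if_false]
      linear_combination b * ξ j * hdi
  rw [eval_charpoly, hfac, det_mul, det_diagonal, det_one_add_replicateCol_mul_replicateRow,
    secularSum, sub_eq_add_neg, ← sum_neg_distrib]
  congr 2
  simp only [dotProduct, d]
  exact sum_congr rfl fun i _ => by ring

lemma eval_charpoly_nonpos_of_one_le_secularSum (hM : ∀ i j, M i j = if i = j then a else b)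
    {ξ : Fin n → ℝ} {t : ℝ} (hξt : ∀ i, (a - b) * ξ i < t)
    (hs : 1 ≤ secularSum b (a - b) ξ t) : (M * diagonal ξ).charpoly.eval t ≤ 0 := by
  rw [eval_charpoly_mul_diagonal hM fun i => (sub_pos.2 (hξt i)).ne']
  exact mul_nonpos_of_nonneg_of_nonpos (prod_nonneg fun i _ => (sub_pos.2 (hξt i)).le)
    (sub_nonpos.2 hs)

/-- If `t ≤ (a - b) ξ i` for some `i`, the secular equation has a root to the right of the
largest `(a - b) ξ i`, where the `i`-th pole makes the secular sum exceed `1`. -/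
lemma mul_lt_of_matrixSpecRad_lt (hM : ∀ i j, M i j = if i = j then a else b) (hb : 0 < b)
    {ξ : Fin n → ℝ} (hξ : ∀ i, 0 ≤ ξ i) {t : ℝ} (ht : matrixSpecRad (M * diagonal ξ) < t) :
    ∀ i, (a - b) * ξ i < t := by
  by_contra! ⟨i₀, hi₀⟩
  obtain ⟨i, -, hi⟩ := exists_max_image univ (fun i => (a - b) * ξ i) ⟨i₀, mem_univ i₀⟩
  have hti : t ≤ (a - b) * ξ i := hi₀.trans (hi i₀ (mem_univ i₀))
  have hρ := matrixSpecRad_nonneg (M * diagonal ξ)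
  have hξi : 0 < ξ i := (hξ i).lt_of_ne fun h => by rw [← h, mul_zero] at hti; linarith
  have hbξ : 0 < b * ξ i := mul_pos hb hξi
  set t₁ := (a - b) * ξ i + b * ξ i / 2 with ht₁
  have hξt₁ : ∀ j, (a - b) * ξ j < t₁ := fun j => (hi j (mem_univ j)).trans_lt (by linarith)
  have hs : 1 ≤ secularSum b (a - b) ξ t₁ := calc
    (1 : ℝ) ≤ b * ξ i / (t₁ - (a - b) * ξ i) := by
      rw [show t₁ - (a - b) * ξ i = b * ξ i / 2 by ring, div_div_cancel₀ hbξ.ne']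
      norm_num
    _ ≤ secularSum b (a - b) ξ t₁ :=
      single_le_sum (f := fun j => b * ξ j / (t₁ - (a - b) * ξ j))
        (fun j _ => div_nonneg (mul_nonneg hb.le (hξ j)) (sub_pos.2 (hξt₁ j)).le) (mem_univ i)
  have := le_matrixSpecRad_of_eval_charpoly_nonpos _
    (eval_charpoly_nonpos_of_one_le_secularSum hM hξt₁ hs)
  linarith

lemma secularSum_lt_one_of_matrixSpecRad_lt (hM : ∀ i j, M i j = if i = j then a else b)
    (hb : 0 < b) {ξ : Fin n → ℝ} (hξ : ∀ i, 0 ≤ ξ i) {t : ℝ}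
    (ht : matrixSpecRad (M * diagonal ξ) < t) : secularSum b (a - b) ξ t < 1 := by
  by_contra! hs
  exact ht.not_ge <| le_matrixSpecRad_of_eval_charpoly_nonpos _ <|
    eval_charpoly_nonpos_of_one_le_secularSum hM (mul_lt_of_matrixSpecRad_lt hM hb hξ ht) hs

lemma matrixSpecRad_le_of_secularSum_le_one (hM : ∀ i j, M i j = if i = j then a else b)
    (ha : 0 ≤ a) (hb : 0 ≤ b) {ξ : Fin n → ℝ} (hξ : ∀ i, 0 ≤ ξ i) {t : ℝ} (ht : 0 ≤ t)
    (hξt : ∀ i, (a - b) * ξ i < t) (hs : secularSum b (a - b) ξ t ≤ 1) :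
    matrixSpecRad (M * diagonal ξ) ≤ t := by
  set w : Fin n → ℝ := fun i => (t - (a - b) * ξ i)⁻¹
  have hA : ∀ i j, 0 ≤ (M * diagonal ξ) i j := fun i j => by
    rw [mul_diagonal, hM]
    split_ifs
    exacts [mul_nonneg ha (hξ j), mul_nonneg hb (hξ j)]
  refine matrixSpecRad_le_of_mulVec_le _ hA (fun i => inv_pos.2 (sub_pos.2 (hξt i))) ht fun i => ?_
  have hrow : ((M * diagonal ξ) *ᵥ w) i = (a - b) * ξ i * w i + secularSum b (a - b) ξ t := by
    have hterm : ∀ j, (M * diagonal ξ) i j * w j =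
        (if i = j then (a - b) * ξ j * w j else 0) + b * ξ j / (t - (a - b) * ξ j) := fun j => by
      rw [mul_diagonal, hM]
      split_ifs <;> simp only [w, div_eq_mul_inv] <;> ring
    simp only [mulVec, dotProduct, hterm, sum_add_distrib, sum_ite_eq, mem_univ, if_true,
      secularSum]
  have hwi : (t - (a - b) * ξ i) * w i = 1 := mul_inv_cancel₀ (sub_pos.2 (hξt i)).ne'
  rw [hrow]
  linarith

end Secular

lemma mul_div_sub_mul_div {b c t x y : ℝ} (hx : t - c * x ≠ 0) (hy : t - c * y ≠ 0) :
    b * y / (t - c * y) - b * x / (t - c * x) = b * t / ((t - c * x) * (t - c * y)) * (y - x) := by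
  rw [div_sub_div _ _ hy hx, div_mul_eq_mul_div,
    div_eq_div_iff (mul_ne_zero hy hx) (mul_ne_zero hx hy)]
  ring

section SecularMajorization

variable {n : ℕ} {b c t : ℝ} {ξ χ : Fin n → ℝ}

lemma IsMajorizedBy.secularSum_le (h : IsMajorizedBy ξ χ) (hb : 0 ≤ b) (ht : 0 ≤ t)
    (hc : 0 ≤ c) (hξ : ∀ i, c * ξ i < t) (hχ : ∀ i, c * χ i < t) :
    secularSum b c ξ t ≤ secularSum b c χ t := by
  refine h.sum_le_sum_of_slope (D := {x | c * x < t})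
    (fun x y => b * t / ((t - c * x) * (t - c * y)))
    (fun x hx y hy => mul_div_sub_mul_div (sub_pos.2 hx).ne' (sub_pos.2 hy).ne')
    (fun x hx y hy x' hx' y' hy' hxx' hyy' => ?_) hξ hχ
  simp only [Set.mem_ofPred_eq] at hx hy hx' hy'
  have := mul_le_mul_of_nonneg_left hxx' hc
  have := mul_le_mul_of_nonneg_left hyy' hc
  exact div_le_div_of_nonneg_left (by positivity) (mul_pos (by linarith) (by linarith))
    (mul_le_mul (by linarith) (by linarith) (by linarith) (by linarith))

lemma IsMajorizedBy.secularSum_le_of_nonpos (h : IsMajorizedBy ξ χ) (hb : 0 ≤ b) (ht : 0 ≤ t)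
    (hc : c ≤ 0) (hξ : ∀ i, c * ξ i < t) (hχ : ∀ i, c * χ i < t) :
    secularSum b c χ t ≤ secularSum b c ξ t := by
  have key := h.sum_le_sum_of_slope (D := {x | c * x < t}) (φ := fun x => -(b * x / (t - c * x)))
    (fun x y => -(b * t / ((t - c * x) * (t - c * y))))
    (fun x hx y hy => by
      rw [neg_mul, ← mul_div_sub_mul_div (sub_pos.2 hx).ne' (sub_pos.2 hy).ne']
      ring)
    (fun x hx y hy x' hx' y' hy' hxx' hyy' => by
      simp only [Set.mem_ofPred_eq] at hx hy hx' hy'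
      have := mul_le_mul_of_nonpos_left hxx' hc
      have := mul_le_mul_of_nonpos_left hyy' hc
      exact neg_le_neg <| div_le_div_of_nonneg_left (by positivity)
        (mul_pos (by linarith) (by linarith))
        (mul_le_mul (by linarith) (by linarith) (by linarith) (by linarith))) hξ hχ
  simpa only [secularSum, sum_neg_distrib, neg_le_neg_iff] using key

end SecularMajorization

theorem stmt6_general (n : ℕ) (a b : ℝ) (ha : 0 ≤ a) (hb : 0 < b)
    (M : Matrix (Fin n) (Fin n) ℝ) (hM : ∀ i j, M i j = if i = j then a else b) :
    (b ≤ a →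
      ∀ ξ χ : Fin n → ℝ, (∀ i, 0 ≤ ξ i) → (∀ i, 0 ≤ χ i) → IsMajorizedBy ξ χ →
        matrixSpecRad (M * Matrix.diagonal ξ) ≤ matrixSpecRad (M * Matrix.diagonal χ)) ∧
    (a ≤ b →
      ∀ ξ χ : Fin n → ℝ, (∀ i, 0 ≤ ξ i) → (∀ i, 0 ≤ χ i) → IsMajorizedBy ξ χ →
        matrixSpecRad (M * Matrix.diagonal χ) ≤ matrixSpecRad (M * Matrix.diagonal ξ)) := by
  refine ⟨fun hba ξ χ hξ hχ hmaj => ?_, fun hab ξ χ hξ hχ hmaj => ?_⟩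
  all_goals refine le_of_forall_gt_imp_ge_of_dense fun t ht => ?_
  all_goals have ht₀ : 0 < t := (matrixSpecRad_nonneg _).trans_lt ht
  · have hχt := mul_lt_of_matrixSpecRad_lt hM hb hχ ht
    have hξt : ∀ i, (a - b) * ξ i < t := fun i =>
      let ⟨j, hj⟩ := hmaj.exists_le i
      (mul_le_mul_of_nonneg_left hj (sub_nonneg.2 hba)).trans_lt (hχt j)
    exact matrixSpecRad_le_of_secularSum_le_one hM ha hb.le hξ ht₀.le hξt <|
      (hmaj.secularSum_le hb.le ht₀.le (sub_nonneg.2 hba) hξt hχt).trans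
        (secularSum_lt_one_of_matrixSpecRad_lt hM hb hχ ht).le
  · have hlt : ∀ ζ : Fin n → ℝ, (∀ i, 0 ≤ ζ i) → ∀ i, (a - b) * ζ i < t := fun ζ hζ i =>
      (mul_nonpos_of_nonpos_of_nonneg (sub_nonpos.2 hab) (hζ i)).trans_lt ht₀
    exact matrixSpecRad_le_of_secularSum_le_one hM ha hb.le hχ ht₀.le (hlt χ hχ) <|
      (hmaj.secularSum_le_of_nonpos hb.le ht₀.le (sub_nonpos.2 hab) (hlt ξ hξ) (hlt χ hχ)).trans
        (secularSum_lt_one_of_matrixSpecRad_lt hM hb hξ ht).le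

/-- Schur-convexity (if `a ≥ b`) and Schur-concavity (if `a ≤ b`) of
`Θ(ξ) = ρ(M·Diag(ξ))` for the matrix `M` with diagonal entries `a` and off-diagonal
entries `b > 0`. -/
theorem stmt6 (n : ℕ) (hn : 1 ≤ n) (a b : ℝ) (ha : 0 ≤ a) (hb : 0 < b)
    (M : Matrix (Fin n) (Fin n) ℝ) (hM : ∀ i j, M i j = if i = j then a else b) :
    (b ≤ a →
      ∀ ξ χ : Fin n → ℝ, (∀ i, 0 ≤ ξ i) → (∀ i, 0 ≤ χ i) → IsMajorizedBy ξ χ →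
        matrixSpecRad (M * Matrix.diagonal ξ) ≤ matrixSpecRad (M * Matrix.diagonal χ)) ∧
    (a ≤ b →
      ∀ ξ χ : Fin n → ℝ, (∀ i, 0 ≤ ξ i) → (∀ i, 0 ≤ χ i) → IsMajorizedBy ξ χ →
        matrixSpecRad (M * Matrix.diagonal χ) ≤ matrixSpecRad (M * Matrix.diagonal ξ)) :=
  stmt6_general n a b ha hb M hM
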